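/- Let W, Z₁,…,Z_N, Z be finite-valued random variables, conditionally i.i.d. given W. Then I(W; Z | Z^N) ≤ (1/N) I(W; Z^N). -/

import Mathlib

/-!
Write `h = H(Z | W)`. Conditional independence gives `H(W, Z^n) = H(W) + n h`, hence
`I(W; Z^N) = H(Z^N) - N h` and `I(W; Z | Z^N) = H(Z^{N+1}) - H(Z^N) - h`. The sequence
`n ↦ H(Z^n)` (`mixtureEntropy π q n`) is concave: by exchangeability its second difference is
`-I(Z_{n+1}; Z_{n+2} | Z^n) ≤ 0`. Together with `H(Z^0) = 0` this gives
`N (H(Z^{N+1}) - H(Z^N)) ≤ H(Z^N)`, which is the claim.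
-/

open Finset

/-- Probability that a finite-valued random variable `X` on the finite
sample space `Ω` (with pmf `p`) takes the value `x`. -/
noncomputable def probOf {Ω α : Type*} [Fintype Ω] [DecidableEq α]
    (p : Ω → ℝ) (X : Ω → α) (x : α) : ℝ :=
  ∑ ω, if X ω = x then p ω else 0

/-- Shannon entropy (natural logarithm) of a finite-valued random variable. -/
noncomputable def entropy {Ω α : Type*} [Fintype Ω] [Fintype α] [DecidableEq α]
    (p : Ω → ℝ) (X : Ω → α) : ℝ :=
  -∑ x, probOf p X x * Real.log (probOf p X x)

/-- Conditional Shannon entropy `H(X | Y)`. -/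
noncomputable def condEntropy {Ω α β : Type*} [Fintype Ω] [Fintype α] [DecidableEq α]
    [Fintype β] [DecidableEq β] (p : Ω → ℝ) (X : Ω → α) (Y : Ω → β) : ℝ :=
  entropy p (fun ω => (X ω, Y ω)) - entropy p Y

/-- Mutual information `I(X; Y)`. -/
noncomputable def mutualInfo {Ω α β : Type*} [Fintype Ω] [Fintype α] [DecidableEq α]
    [Fintype β] [DecidableEq β] (p : Ω → ℝ) (X : Ω → α) (Y : Ω → β) : ℝ :=
  entropy p X + entropy p Y - entropy p (fun ω => (X ω, Y ω))

/-- Conditional mutual information `I(X; Y | Z)`. -/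
noncomputable def condMI {Ω α β γ : Type*} [Fintype Ω] [Fintype α] [DecidableEq α]
    [Fintype β] [DecidableEq β] [Fintype γ] [DecidableEq γ]
    (p : Ω → ℝ) (X : Ω → α) (Y : Ω → β) (Z : Ω → γ) : ℝ :=
  condEntropy p X Z + condEntropy p Y Z - condEntropy p (fun ω => (X ω, Y ω)) Z

/-- `p` is a probability mass function. -/
def IsPMF {Ω : Type*} [Fintype Ω] (p : Ω → ℝ) : Prop :=
  (∀ ω, 0 ≤ p ω) ∧ ∑ ω, p ω = 1

open Real (log negMulLog negMulLog_mul log_le_sub_one_of_pos log_div log_mul)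

lemma entropy_eq_sum_negMulLog {Ω α : Type*} [Fintype Ω] [Fintype α] [DecidableEq α]
    (p : Ω → ℝ) (X : Ω → α) : entropy p X = ∑ x, negMulLog (probOf p X x) := by
  simp [entropy, negMulLog, sum_neg_distrib]

lemma mul_log_div_le_sub {a b : ℝ} (ha : 0 ≤ a) (hb : 0 ≤ b) (hab : b = 0 → a = 0) :
    a * log (b / a) ≤ b - a := by
  rcases ha.eq_or_lt with rfl | ha
  · simpa using hb
  have hb : 0 < b := hb.lt_of_ne fun h => ha.ne' (hab h.symm)
  calc a * log (b / a) ≤ a * (b / a - 1) := by gcongr; exact log_le_sub_one_of_pos (by positivity)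
    _ = b - a := by field_simp

lemma sum_negMulLog_add_negMulLog_sum_le {β γ : Type*} [Fintype β] [Fintype γ]
    (R : β → γ → ℝ) (hR : ∀ b c, 0 ≤ R b c) :
    ∑ b, ∑ c, negMulLog (R b c) + negMulLog (∑ b, ∑ c, R b c)
      ≤ ∑ b, negMulLog (∑ c, R b c) + ∑ c, negMulLog (∑ b, R b c) := by
  set row := fun b => ∑ c, R b c
  set col := fun c => ∑ b, R b c
  set S := ∑ b, ∑ c, R b c
  have row_nonneg b : 0 ≤ row b := sum_nonneg fun c _ => hR b c
  have col_nonneg c : 0 ≤ col c := sum_nonneg fun b _ => hR b c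
  have S_nonneg : 0 ≤ S := sum_nonneg fun b _ => row_nonneg b
  have col_sum : ∑ c, col c = S := sum_comm
  have pos b c (h : 0 < R b c) : 0 < row b ∧ 0 < col c ∧ 0 < S :=
    have hr : 0 < row b := h.trans_le (single_le_sum (fun c _ => hR b c) (mem_univ c))
    ⟨hr, h.trans_le (single_le_sum (f := (R · c)) (fun b _ => hR b c) (mem_univ b)),
      hr.trans_le (single_le_sum (f := row) (fun b _ => row_nonneg b) (mem_univ b))⟩
  -- Gibbs' inequality against the product of the marginals `row b * col c / S`
  have gibbs : ∑ b, ∑ c, R b c * log (row b * col c / S / R b c) ≤ 0 :=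
    calc _ ≤ ∑ b, ∑ c, (row b * col c / S - R b c) := by
          gcongr with b _ c _
          have := row_nonneg b; have := col_nonneg c
          refine mul_log_div_le_sub (hR b c) (by positivity) fun h => ?_
          by_contra hne
          obtain ⟨hr, hc, hS⟩ := pos b c ((hR b c).lt_of_ne' hne)
          exact absurd h (by positivity)
      _ = S * S / S - S := by
          simp only [sum_sub_distrib, ← sum_div, ← mul_sum, ← sum_mul, col_sum]; rfl
      _ = 0 := by rcases eq_or_ne S 0 with h | h <;> simp [h]
  have expand b c : R b c * log (row b * col c / S / R b c) =
      R b c * log (row b) + R b c * log (col c) - R b c * log S + negMulLog (R b c) := by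
    rcases (hR b c).eq_or_lt with h | h
    · simp [← h]
    obtain ⟨hr, hc, hS⟩ := pos b c h
    rw [log_div (by positivity) h.ne', log_div (by positivity) hS.ne', log_mul hr.ne' hc.ne',
      negMulLog]
    ring
  have hrow : ∑ b, ∑ c, R b c * log (row b) = ∑ b, row b * log (row b) :=
    sum_congr rfl fun b _ => (sum_mul ..).symm
  have hcol : ∑ b, ∑ c, R b c * log (col c) = ∑ c, col c * log (col c) :=
    sum_comm.trans (sum_congr rfl fun c _ => (sum_mul ..).symm)
  have hS : ∑ b, ∑ c, R b c * log S = S * log S := by simp only [← sum_mul]; rfl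
  simp only [expand, sum_add_distrib, sum_sub_distrib, hrow, hcol, hS] at gibbs
  simp only [negMulLog, neg_mul, sum_neg_distrib] at gibbs ⊢
  linarith

lemma probOf_eq_sum_of_inverse {Ω α β : Type*} [Fintype Ω] [Fintype α] [Fintype β]
    [DecidableEq α] (p : Ω → ℝ) (X : Ω → α) (Y : Ω → β) (g : α → β → Ω)
    (hg : ∀ ω, g (X ω) (Y ω) = ω) (hX : ∀ a b, X (g a b) = a) (hY : ∀ a b, Y (g a b) = b)
    (a : α) : probOf p X a = ∑ b, p (g a b) := by
  let e : α × β ≃ Ω :=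
    { toFun := fun ab => g ab.1 ab.2
      invFun := fun ω => (X ω, Y ω)
      left_inv := fun ab => by simp [hX, hY]
      right_inv := hg }
  rw [probOf, ← e.sum_comp, Fintype.sum_prod_type]
  simp [e, hX]

lemma natCast_mul_sub_le_sub_of_concave (s : ℕ → ℝ)
    (hs : ∀ n, s (n + 2) + s n ≤ 2 * s (n + 1)) (N : ℕ) :
    N * (s (N + 1) - s N) ≤ s N - s 0 := by
  have hd : Antitone fun n => s (n + 1) - s n :=
    antitone_nat_of_succ_le fun n => by linarith [hs n]
  calc (N : ℝ) * (s (N + 1) - s N) = ∑ _i ∈ range N, (s (N + 1) - s N) := by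
        rw [sum_const, card_range, nsmul_eq_mul]
    _ ≤ ∑ i ∈ range N, (s (i + 1) - s i) := sum_le_sum fun i hi => hd (mem_range.mp hi).le
    _ = s N - s 0 := sum_range_sub s N

lemma Fintype.sum_fin_succ_fun_eq_sum_snoc {α M : Type*} [Fintype α] [AddCommMonoid M] {k : ℕ}
    (F : (Fin (k + 1) → α) → M) : ∑ g, F g = ∑ f : Fin k → α, ∑ a, F (Fin.snoc f a) := by
  rw [← Fintype.sum_equiv (Fin.snocEquiv fun _ => α) (fun x => F (Fin.snoc x.2 x.1)) F
    fun _ => rfl, Fintype.sum_prod_type, sum_comm]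

lemma Fintype.sum_prod_eq_one_of_sum_eq_one {α : Type*} [Fintype α] {q : α → ℝ}
    (hq : ∑ a, q a = 1) (k : ℕ) : ∑ f : Fin k → α, ∏ i, q (f i) = 1 := by
  rw [← Fintype.sum_pow, hq, one_pow]

lemma sum_negMulLog_prod_fin {α : Type*} [Fintype α] {q : α → ℝ} (hq : ∑ a, q a = 1) (k : ℕ) :
    ∑ f : Fin k → α, negMulLog (∏ i, q (f i)) = k * ∑ a, negMulLog (q a) := by
  induction k with
  | zero => simp
  | succ k ih =>
    simp only [Fintype.sum_fin_succ_fun_eq_sum_snoc, Fin.prod_univ_castSucc, Fin.snoc_castSucc,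
      Fin.snoc_last, negMulLog_mul, sum_add_distrib, ← mul_sum, ← sum_mul, hq, ih,
      Fintype.sum_prod_eq_one_of_sum_eq_one hq]
    push_cast
    ring

section CondIID

variable {𝓦 𝓩 : Type*} (π : 𝓦 → ℝ) (q : 𝓦 → 𝓩 → ℝ)

noncomputable def condIIDLaw (n : ℕ) (ω : 𝓦 × (Fin n → 𝓩)) : ℝ :=
  π ω.1 * ∏ i, q ω.1 (ω.2 i)

lemma condIIDLaw_snoc (n : ℕ) (w : 𝓦) (f : Fin n → 𝓩) (z : 𝓩) :
    condIIDLaw π q (n + 1) (w, Fin.snoc f z) = π w * (∏ i, q w (f i)) * q w z := by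
  simp [condIIDLaw, Fin.prod_univ_castSucc, mul_assoc]

variable [Fintype 𝓦]

noncomputable def mixtureLaw (n : ℕ) (f : Fin n → 𝓩) : ℝ :=
  ∑ w, π w * ∏ i, q w (f i)

lemma mixtureLaw_snoc (n : ℕ) (f : Fin n → 𝓩) (z : 𝓩) :
    mixtureLaw π q (n + 1) (Fin.snoc f z) = ∑ w, π w * (∏ i, q w (f i)) * q w z := by
  simp [mixtureLaw, Fin.prod_univ_castSucc, mul_assoc]

lemma mixtureLaw_snoc_snoc_comm (n : ℕ) (f : Fin n → 𝓩) (a b : 𝓩) :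
    mixtureLaw π q (n + 2) (Fin.snoc (Fin.snoc f a) b)
      = mixtureLaw π q (n + 2) (Fin.snoc (Fin.snoc f b) a) := by
  simp only [mixtureLaw_snoc, Fin.prod_univ_castSucc, Fin.snoc_castSucc, Fin.snoc_last]
  exact sum_congr rfl fun w _ => by ring

variable [Fintype 𝓩]

noncomputable def mixtureEntropy (n : ℕ) : ℝ :=
  ∑ f : Fin n → 𝓩, negMulLog (mixtureLaw π q n f)

variable {π q}

lemma sum_mixtureLaw_snoc (hq : ∀ w, ∑ z, q w z = 1) (n : ℕ) (f : Fin n → 𝓩) :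
    ∑ z, mixtureLaw π q (n + 1) (Fin.snoc f z) = mixtureLaw π q n f := by
  simp_rw [mixtureLaw_snoc, mixtureLaw]
  rw [sum_comm]
  simp [← mul_sum, hq]

lemma mixtureEntropy_zero (hπ : ∑ w, π w = 1) : mixtureEntropy π q 0 = 0 := by
  simp [mixtureEntropy, mixtureLaw, hπ]

lemma mixtureEntropy_concave (hπ : ∀ w, 0 ≤ π w) (hq₀ : ∀ w z, 0 ≤ q w z)
    (hq : ∀ w, ∑ z, q w z = 1) (n : ℕ) :
    mixtureEntropy π q (n + 2) + mixtureEntropy π q n ≤ 2 * mixtureEntropy π q (n + 1) := by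
  have hR f a b : 0 ≤ mixtureLaw π q (n + 2) (Fin.snoc (Fin.snoc f a) b) :=
    sum_nonneg fun w _ => mul_nonneg (hπ w) (prod_nonneg fun i _ => hq₀ w _)
  have hcol f c : ∑ a, mixtureLaw π q (n + 2) (Fin.snoc (Fin.snoc f a) c)
      = mixtureLaw π q (n + 1) (Fin.snoc f c) := by
    simp_rw [mixtureLaw_snoc_snoc_comm π q n f _ c]
    exact sum_mixtureLaw_snoc hq _ _
  have hsum := sum_le_sum fun f (_ : f ∈ univ) => sum_negMulLog_add_negMulLog_sum_le _ (hR f)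
  simp only [sum_mixtureLaw_snoc hq, hcol, sum_add_distrib] at hsum
  simp only [mixtureEntropy, Fintype.sum_fin_succ_fun_eq_sum_snoc]
  linarith

lemma sum_negMulLog_condIIDLaw (hq : ∀ w, ∑ z, q w z = 1) (n : ℕ) :
    ∑ ω, negMulLog (condIIDLaw π q n ω)
      = ∑ w, negMulLog (π w) + n * ∑ w, π w * ∑ z, negMulLog (q w z) := by
  have hw w : ∑ f : Fin n → 𝓩, negMulLog (π w * ∏ i, q w (f i))
      = negMulLog (π w) + n * (π w * ∑ z, negMulLog (q w z)) := by
    simp only [negMulLog_mul, sum_add_distrib, ← sum_mul, ← mul_sum,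
      Fintype.sum_prod_eq_one_of_sum_eq_one (hq w), sum_negMulLog_prod_fin (hq w)]
    ring
  simp only [condIIDLaw, Fintype.sum_prod_type, hw, sum_add_distrib, mul_sum]

lemma probOf_condIIDLaw_fst [DecidableEq 𝓦] (hq : ∀ w, ∑ z, q w z = 1) (n : ℕ) (w : 𝓦) :
    probOf (condIIDLaw π q n) (fun ω => ω.1) w = π w := by
  rw [probOf_eq_sum_of_inverse _ _ (fun ω => ω.2) Prod.mk (fun _ => rfl) (fun _ _ => rfl)
    (fun _ _ => rfl)]
  simp [condIIDLaw, ← mul_sum, Fintype.sum_prod_eq_one_of_sum_eq_one (hq w)]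

lemma probOf_condIIDLaw_init [DecidableEq 𝓩] (hq : ∀ w, ∑ z, q w z = 1) (n : ℕ)
    (f : Fin n → 𝓩) :
    probOf (condIIDLaw π q (n + 1)) (fun ω i => ω.2 (Fin.castSucc i)) f = mixtureLaw π q n f := by
  rw [probOf_eq_sum_of_inverse _ _ (fun ω => (ω.1, ω.2 (Fin.last n)))
    (fun f wz => (wz.1, Fin.snoc f wz.2)) (fun ω => Prod.ext rfl (Fin.snoc_init_self ω.2))
    (fun _ _ => by simp) (fun _ _ => by simp)]
  simp [Fintype.sum_prod_type, condIIDLaw_snoc, mixtureLaw, mul_assoc, ← mul_sum, hq]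

lemma probOf_condIIDLaw_fst_init [DecidableEq 𝓦] [DecidableEq 𝓩] (hq : ∀ w, ∑ z, q w z = 1)
    (n : ℕ) (x : 𝓦 × (Fin n → 𝓩)) :
    probOf (condIIDLaw π q (n + 1)) (fun ω => (ω.1, fun i => ω.2 (Fin.castSucc i))) x
      = condIIDLaw π q n x := by
  rw [probOf_eq_sum_of_inverse _ _ (fun ω => ω.2 (Fin.last n))
    (fun x z => (x.1, Fin.snoc x.2 z)) (fun ω => Prod.ext rfl (Fin.snoc_init_self ω.2))
    (fun _ _ => by simp) (fun _ _ => by simp)]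
  simp only [condIIDLaw_snoc]
  simp [condIIDLaw, ← mul_sum, hq]

lemma probOf_condIIDLaw_last_init [DecidableEq 𝓩] (n : ℕ) (x : 𝓩 × (Fin n → 𝓩)) :
    probOf (condIIDLaw π q (n + 1)) (fun ω => (ω.2 (Fin.last n), fun i => ω.2 (Fin.castSucc i))) x
      = mixtureLaw π q (n + 1) (Fin.snoc x.2 x.1) := by
  rw [probOf_eq_sum_of_inverse _ _ (fun ω => ω.1)
    (fun x w => (w, Fin.snoc x.2 x.1)) (fun ω => Prod.ext rfl (Fin.snoc_init_self ω.2))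
    (fun _ _ => by simp) (fun _ _ => by simp)]
  rfl

lemma probOf_condIIDLaw_fst_last_init [DecidableEq 𝓦] [DecidableEq 𝓩] (n : ℕ)
    (x : (𝓦 × 𝓩) × (Fin n → 𝓩)) :
    probOf (condIIDLaw π q (n + 1))
        (fun ω => ((ω.1, ω.2 (Fin.last n)), fun i => ω.2 (Fin.castSucc i))) x
      = condIIDLaw π q (n + 1) (x.1.1, Fin.snoc x.2 x.1.2) := by
  rw [probOf_eq_sum_of_inverse _ _ (fun _ => ())
    (fun x _ => (x.1.1, Fin.snoc x.2 x.1.2)) (fun ω => Prod.ext rfl (Fin.snoc_init_self ω.2))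
    (fun _ _ => by simp) (fun _ _ => rfl)]
  simp

lemma entropy_condIIDLaw_fst [DecidableEq 𝓦] (hq : ∀ w, ∑ z, q w z = 1) (n : ℕ) :
    entropy (condIIDLaw π q n) (fun ω => ω.1) = ∑ w, negMulLog (π w) := by
  simp only [entropy_eq_sum_negMulLog, probOf_condIIDLaw_fst hq]

lemma entropy_condIIDLaw_init [DecidableEq 𝓩] (hq : ∀ w, ∑ z, q w z = 1) (n : ℕ) :
    entropy (condIIDLaw π q (n + 1)) (fun ω i => ω.2 (Fin.castSucc i)) = mixtureEntropy π q n := by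
  simp only [entropy_eq_sum_negMulLog, probOf_condIIDLaw_init hq, mixtureEntropy]

lemma entropy_condIIDLaw_fst_init [DecidableEq 𝓦] [DecidableEq 𝓩] (hq : ∀ w, ∑ z, q w z = 1)
    (n : ℕ) :
    entropy (condIIDLaw π q (n + 1)) (fun ω => (ω.1, fun i => ω.2 (Fin.castSucc i)))
      = ∑ w, negMulLog (π w) + n * ∑ w, π w * ∑ z, negMulLog (q w z) := by
  simp only [entropy_eq_sum_negMulLog, probOf_condIIDLaw_fst_init hq,
    sum_negMulLog_condIIDLaw hq]

lemma entropy_condIIDLaw_last_init [DecidableEq 𝓩] (n : ℕ) :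
    entropy (condIIDLaw π q (n + 1)) (fun ω => (ω.2 (Fin.last n), fun i => ω.2 (Fin.castSucc i)))
      = mixtureEntropy π q (n + 1) := by
  simp only [entropy_eq_sum_negMulLog, probOf_condIIDLaw_last_init, Fintype.sum_prod_type,
    mixtureEntropy, Fintype.sum_fin_succ_fun_eq_sum_snoc]
  exact sum_comm

lemma entropy_condIIDLaw_fst_last_init [DecidableEq 𝓦] [DecidableEq 𝓩]
    (hq : ∀ w, ∑ z, q w z = 1) (n : ℕ) :
    entropy (condIIDLaw π q (n + 1))
        (fun ω => ((ω.1, ω.2 (Fin.last n)), fun i => ω.2 (Fin.castSucc i)))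
      = ∑ w, negMulLog (π w) + (n + 1) * ∑ w, π w * ∑ z, negMulLog (q w z) := by
  rw [entropy_eq_sum_negMulLog, ← Nat.cast_add_one, ← sum_negMulLog_condIIDLaw hq]
  simp only [probOf_condIIDLaw_fst_last_init, Fintype.sum_prod_type,
    Fintype.sum_fin_succ_fun_eq_sum_snoc]
  exact sum_congr rfl fun w _ => sum_comm

end CondIID

/-- Lemma 1 (Xu–Raginsky): under the conditionally i.i.d. model,
`I(W; Z | Z^N) ≤ (1/N) I(W; Z^N)`. -/
theorem cmi_le_mi_div_N {𝓦 𝓩 : Type*} [Fintype 𝓦] [DecidableEq 𝓦] [Fintype 𝓩] [DecidableEq 𝓩]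
    (N : ℕ) (hN : 1 ≤ N) (π : 𝓦 → ℝ) (q : 𝓦 → 𝓩 → ℝ)
    (hπ : IsPMF π) (hq : ∀ w, IsPMF (q w))
    (p : 𝓦 × (Fin (N + 1) → 𝓩) → ℝ)
    (hp : p = fun ωf => π ωf.1 * ∏ i, q ωf.1 (ωf.2 i)) :
    condMI p (fun ωf => ωf.1) (fun ωf => ωf.2 (Fin.last N))
        (fun ωf => fun i : Fin N => ωf.2 i.castSucc)
      ≤ (1 / (N : ℝ)) * mutualInfo p (fun ωf => ωf.1) (fun ωf => fun i : Fin N => ωf.2 i.castSucc) := by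
  obtain rfl : p = condIIDLaw π q (N + 1) := hp
  have hq₁ : ∀ w, ∑ z, q w z = 1 := fun w => (hq w).2
  simp only [condMI, condEntropy, mutualInfo, entropy_condIIDLaw_fst hq₁,
    entropy_condIIDLaw_init hq₁, entropy_condIIDLaw_fst_init hq₁, entropy_condIIDLaw_last_init,
    entropy_condIIDLaw_fst_last_init hq₁]
  have key := natCast_mul_sub_le_sub_of_concave (mixtureEntropy π q)
    (mixtureEntropy_concave hπ.1 (fun w => (hq w).1) hq₁) N
  rw [mixtureEntropy_zero hπ.2] at key
  rw [one_div, inv_mul_eq_div, le_div_iff₀ (by exact_mod_cast hN)]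
  linear_combination key
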